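/- arXiv:1306.1750 — 5 statements merged into one kernel-verified Lean document; each statement's English description precedes it below -/
import Mathlib

section
/- For all real z, W(-z, -1/2, 1/2) = (1/√π) · e^{-z²/4}, where W is the Wright function. -/
open Real

/-- The Wright function `W(z, α, β) = ∑_{n≥0} z^n / (n! Γ(αn + β))`
(with the convention `1/Γ = 0` at the poles of `Γ`). -/
noncomputable def wright (z α β : ℝ) : ℝ :=
  ∑' n : ℕ, z ^ n / ((Nat.factorial n : ℝ) * Real.Gamma (α * n + β))

/-- The Mainardi function `M_ν(z) = W(-z, -ν, 1-ν)`. -/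
noncomputable def mainardi (ν z : ℝ) : ℝ :=
  ∑' n : ℕ, (-z) ^ n / ((Nat.factorial n : ℝ) * Real.Gamma (-ν * n + 1 - ν))

/-- The Gauss error function `erf y = (2/√π) ∫₀^y e^{-t²} dt`. -/
noncomputable def erf (y : ℝ) : ℝ :=
  (2 / Real.sqrt π) * ∫ t in (0:ℝ)..y, Real.exp (-t ^ 2)

lemma gamma_half_sub (k : ℕ) :
    Real.Gamma (1/2 - k) = Real.sqrt π * (-4) ^ k * k.factorial / (2 * k).factorial := by
  induction k with
  | zero =>
    rw [show ((1:ℝ)/2 - (0:ℕ)) = 1/2 by norm_num, Real.Gamma_one_half_eq]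
    simp
  | succ k ih =>
    have hk0 : (0:ℝ) ≤ k := Nat.cast_nonneg k
    have hx : (1/2 - (k:ℝ) - 1) ≠ 0 := by intro h; linarith
    have hrec := Real.Gamma_add_one hx
    have hk : (1/2 : ℝ) - (k + 1 : ℕ) = (1/2 - k) - 1 := by push_cast; ring
    have h1 : ((1/2 : ℝ) - k - 1) * Real.Gamma (1/2 - k - 1) = Real.Gamma (1/2 - k) := by
      rw [← hrec]; congr 1; ring
    have hG : Real.Gamma (1/2 - (k:ℝ) - 1)
        = Real.Gamma (1/2 - k) / ((1/2:ℝ) - k - 1) := by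
      rw [eq_div_iff hx]; linarith [h1]
    have hf1 : ((2 * (k+1)).factorial : ℝ)
        = (2*(k:ℝ)+2) * ((2*(k:ℝ)+1) * (2*k).factorial) := by
      have h : 2 * (k+1) = ((2*k) + 1) + 1 := by ring
      rw [h, Nat.factorial_succ, Nat.factorial_succ]
      push_cast; ring
    have hf2 : ((k+1).factorial : ℝ) = ((k:ℝ)+1) * k.factorial := by
      rw [Nat.factorial_succ]; push_cast; ring
    have hne1 : ((2*k).factorial : ℝ) ≠ 0 := by positivity
    rw [hk, hG, ih, hf1, hf2, div_div, div_eq_div_iff]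
    · ring
    · exact mul_ne_zero hne1 hx
    · positivity

/-- `W(-z, -1/2, 1/2) = (1/√π) e^{-z²/4}` for all real `z`. -/
theorem wright_neg_half_half (z : ℝ) :
    wright (-z) (-(1/2)) (1/2) = (1 / Real.sqrt π) * Real.exp (-z ^ 2 / 4) := by
  unfold wright
  set f : ℕ → ℝ := fun n => (-z) ^ n / ((Nat.factorial n : ℝ) * Real.Gamma (-(1/2) * n + 1/2))
    with hf
  have hinj : Function.Injective (fun k : ℕ => 2 * k) := fun a b h => by
    dsimp at h; omega
  have hsupp : Function.support f ⊆ Set.range (fun k : ℕ => 2 * k) := by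
    intro n hn
    by_contra hmem
    apply hn
    obtain ⟨m, hm⟩ : ∃ m, n = 2 * m + 1 := by
      rcases Nat.even_or_odd n with ⟨m, hm⟩ | ⟨m, hm⟩
      · exact absurd ⟨m, by dsimp; omega⟩ hmem
      · exact ⟨m, hm⟩
    have hg : Real.Gamma (-(1/2) * n + 1/2) = 0 := by
      have h : -(1/2 : ℝ) * n + 1/2 = -(m : ℝ) := by
        subst hm; push_cast; ring
      rw [h]; exact Real.Gamma_neg_nat_eq_zero m
    show f n = 0
    simp only [hf]
    rw [hg, mul_zero, div_zero]
  have key : ∀ k : ℕ, f (2 * k) = (1 / Real.sqrt π) * ((-z^2/4) ^ k / k.factorial) := by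
    intro k
    have harg : -(1/2 : ℝ) * (2*k : ℕ) + 1/2 = 1/2 - k := by push_cast; ring
    simp only [hf, harg, gamma_half_sub]
    have hzz : (-z) ^ (2*k) = (z^2) ^ k := by rw [pow_mul, neg_sq]
    rw [hzz]
    have hsq : Real.sqrt π ≠ 0 := by positivity
    have hfac : ((2*k).factorial : ℝ) ≠ 0 := by positivity
    have hkfac : ((k).factorial : ℝ) ≠ 0 := by positivity
    have h4 : ((-4:ℝ)) ^ k ≠ 0 := pow_ne_zero _ (by norm_num)
    have hlhs : ((2*k).factorial : ℝ) * (Real.sqrt π * (-4) ^ k * k.factorial / (2*k).factorial)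
        = Real.sqrt π * (-4) ^ k * k.factorial := by
      field_simp
    rw [hlhs]
    have hpow : (-z^2/4 : ℝ) ^ k = (z^2)^k / (-4)^k := by
      rw [← div_pow]; congr 1; ring
    rw [hpow]
    field_simp
  calc ∑' n, f n = ∑' k, f (2 * k) := (hinj.tsum_eq hsupp).symm
    _ = ∑' k, (1 / Real.sqrt π) * ((-z^2/4) ^ k / k.factorial) := tsum_congr key
    _ = (1 / Real.sqrt π) * ∑' k, ((-z^2/4) ^ k / (k.factorial : ℝ)) := tsum_mul_left
    _ = (1 / Real.sqrt π) * Real.exp (-z^2/4) := by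
        congr 1
        rw [Real.exp_eq_exp_ℝ, NormedSpace.exp_eq_tsum_div]
end

section
/- For all x ≥ 0, W(-x, -1/2, 1) = erfc(x/2), where erfc is the complementary error function erfc(y) = (2/√π) ∫_y^∞ e^{-t²} dt. -/
/-!
At `α = -1/2`, `β = 1` the even terms of the Wright series vanish except the first, because
`Γ(1 - k)` has a pole for `k ≥ 1`. With `Γ(1/2 - k) (2k)! = (-4)^k k! √π`, the odd terms become
those of the Maclaurin series of `erf (z/2)`, obtained by integrating the series of `exp (-t²)`
term by term. Hence `W(z, -1/2, 1) = 1 + erf (z/2)` for every real `z`, and the theorem follows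
because `erf` is odd and `erfc = 1 - erf`.
-/

open Real

/-- The complementary error function `erfc y = (2/√π) ∫_y^∞ e^{-t²} dt`. -/
noncomputable def erfc (y : ℝ) : ℝ :=
  (2 / Real.sqrt π) * ∫ t in Set.Ioi y, Real.exp (-t ^ 2)

open MeasureTheory Nat

theorem Real.Gamma_one_half_sub_nat_mul_factorial (k : ℕ) :
    Gamma (1 / 2 - k) * (2 * k)! = (-4) ^ k * k ! * √π := by
  induction k with
  | zero => simpa using Gamma_one_half_eq
  | succ k ih =>
    have hne : (1 / 2 : ℝ) - (k + 1 : ℕ) ≠ 0 := by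
      push_cast
      linarith [(k.cast_nonneg : (0 : ℝ) ≤ k)]
    have hrec := Gamma_add_one hne
    rw [show (1 / 2 : ℝ) - (k + 1 : ℕ) + 1 = 1 / 2 - k by push_cast; ring] at hrec
    rw [show 2 * (k + 1) = 2 * k + 1 + 1 by ring, factorial_succ, factorial_succ,
      factorial_succ]
    rw [hrec] at ih
    push_cast at ih ⊢
    linear_combination (-(4 * k + 4 : ℝ)) * ih

theorem hasSum_intervalIntegral_exp_neg_sq (y : ℝ) :
    HasSum (fun k : ℕ => (-1) ^ k * y ^ (2 * k + 1) / (k ! * (2 * k + 1)))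
      (∫ t in (0 : ℝ)..y, exp (-t ^ 2)) := by
  have hexp : ∀ s : ℝ, HasSum (fun k : ℕ => s ^ k / k !) (exp s) := fun s => by
    rw [exp_eq_exp_ℝ]
    exact NormedSpace.expSeries_div_hasSum_exp s
  have hterm : ∀ k : ℕ, ∫ t in (0 : ℝ)..y, (-t ^ 2) ^ k / k !
      = (-1) ^ k * y ^ (2 * k + 1) / (k ! * (2 * k + 1)) := fun k => by
    have hmonomial : ∀ t : ℝ, (-t ^ 2) ^ k / k ! = (-1) ^ k / k ! * t ^ (2 * k) := fun t => by
      rw [neg_pow, ← pow_mul]; ring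
    simp_rw [hmonomial, intervalIntegral.integral_const_mul, integral_pow]
    push_cast
    field_simp
    ring
  simp_rw [← hterm]
  refine intervalIntegral.hasSum_integral_of_dominated_convergence
    (fun k t => (t ^ 2) ^ k / k !) (fun k => by fun_prop) (fun k => ?_)
    (.of_forall fun t _ => (hexp _).summable) ?_ (.of_forall fun t _ => hexp _)
  · refine .of_forall fun t _ => ?_
    rw [norm_div, norm_pow, norm_neg, Real.norm_of_nonneg (sq_nonneg t), Real.norm_natCast]
  · simp_rw [fun t : ℝ => (hexp (t ^ 2)).tsum_eq]
    exact (by fun_prop : Continuous fun t : ℝ => exp (t ^ 2)).intervalIntegrable _ _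

theorem erf_neg (y : ℝ) : erf (-y) = -erf y := by
  have hsymm : ∫ t in (-y)..0, exp (-t ^ 2) = ∫ t in (0 : ℝ)..y, exp (-t ^ 2) := by
    have := intervalIntegral.integral_comp_neg (a := 0) (b := y) fun t => exp (-t ^ 2)
    simp only [neg_sq, neg_zero] at this
    exact this.symm
  rw [erf, erf, intervalIntegral.integral_symm, hsymm, mul_neg]

theorem erfc_eq_one_sub_erf (y : ℝ) : erfc y = 1 - erf y := by
  have hint : Integrable fun t : ℝ => exp (-t ^ 2) := by
    simpa using integrable_exp_neg_mul_sq one_pos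
  have hhalf : ∫ t in Set.Ioi 0, exp (-t ^ 2) = √π / 2 := by
    simpa using integral_gaussian_Ioi 1
  have hsplit := intervalIntegral.integral_interval_add_Ioi (a := 0) (b := y)
    hint.integrableOn hint.integrableOn
  rw [hhalf] at hsplit
  rw [erfc, erf, eq_sub_of_add_eq' hsplit]
  field_simp

noncomputable def wrightTerm (z α β : ℝ) (n : ℕ) : ℝ :=
  z ^ n / (n ! * Gamma (α * n + β))

theorem wrightTerm_neg_half_one_even (z : ℝ) (k : ℕ) :
    wrightTerm z (-(1 / 2)) 1 (2 * k) = if k = 0 then 1 else 0 := by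
  cases k with
  | zero => simp [wrightTerm]
  | succ k => simp [wrightTerm, Gamma_neg_nat_eq_zero]

theorem wrightTerm_neg_half_one_odd (z : ℝ) (k : ℕ) :
    wrightTerm z (-(1 / 2)) 1 (2 * k + 1) =
      2 / √π * ((-1) ^ k * (z / 2) ^ (2 * k + 1) / (k ! * (2 * k + 1))) := by
  have harg : -(1 / 2 : ℝ) * ((2 * k + 1 : ℕ) : ℝ) + 1 = 1 / 2 - k := by push_cast; ring
  have hGamma : Gamma (1 / 2 - k) = (-1) ^ k * 4 ^ k * k ! * √π / (2 * k)! := by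
    rw [eq_div_iff (by positivity), Gamma_one_half_sub_nat_mul_factorial, neg_pow]
  have hpow : (z / 2) ^ (2 * k + 1) = z ^ (2 * k + 1) / (2 * 4 ^ k) := by
    rw [div_pow, pow_succ (2 : ℝ), pow_mul]; norm_num; ring
  rw [wrightTerm, harg, hGamma, hpow, factorial_succ]
  push_cast
  field_simp
  rw [← pow_mul, pow_mul', neg_one_sq, one_pow, mul_one]

theorem wright_neg_half_one (z : ℝ) : wright z (-(1 / 2)) 1 = 1 + erf (z / 2) := by
  have heven : HasSum (fun k => wrightTerm z (-(1 / 2)) 1 (2 * k)) 1 := by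
    simp_rw [wrightTerm_neg_half_one_even]
    exact hasSum_ite_eq 0 1
  have hodd : HasSum (fun k => wrightTerm z (-(1 / 2)) 1 (2 * k + 1)) (erf (z / 2)) := by
    simp_rw [wrightTerm_neg_half_one_odd]
    exact (hasSum_intervalIntegral_exp_neg_sq _).mul_left _
  exact (heven.even_add_odd hodd).tsum_eq

theorem wright_eq_erfc_general (x : ℝ) :
    wright (-x) (-(1/2)) 1 = erfc (x / 2) := by
  rw [wright_neg_half_one, erfc_eq_one_sub_erf, neg_div, erf_neg, sub_eq_add_neg]

/-- For all `x ≥ 0`, `W(-x, -1/2, 1) = erfc (x/2)`. -/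
theorem wright_eq_erfc (x : ℝ) (hx : 0 ≤ x) :
    wright (-x) (-(1/2)) 1 = erfc (x / 2) :=
  wright_eq_erfc_general x
end

section
/- For each fixed x ≥ 0, lim_{α→1⁻} M_{α/2}(x) = (1/√π) e^{-x²/4}, where M_{α/2}(x) = ∑_{n≥0} (-x)^n / (n! Γ(-(α/2)n + 1 - α/2)). -/
open Real

/-!
The limit is the continuity of `ν ↦ M_ν(x)` at `ν = 1/2`. Each term is continuous in `ν`
because `1/Γ` is entire. For `ν ∈ [a, 1/2]` with `a > 0`, put `t = ν(n+1)`: the reflection formula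
gives `|1/Γ(1 - t)| ≤ Γ(t)/π`, and as `t ∈ [a, ⌊n/2⌋ + 1]`, convexity of `Γ` bounds `Γ(t)` by
`Γ(a) + ⌊n/2⌋!`. Since `⌊n/2⌋!² ≤ n!`, the series is dominated uniformly on `[a, 1/2]` by a
convergent one. At `ν = 1/2` the odd terms vanish at the poles of `Γ`, and
`Γ(1/2 - k) (2k)! = (-4)^k k! √π` turns the even terms into the exponential series of `-x²/4`,
divided by `√π`.
-/

open Nat Set

lemma Nat.factorial_div_two_mul_self_le (n : ℕ) : (n / 2)! * (n / 2)! ≤ n ! := by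
  have hdvd := factorial_mul_factorial_dvd_factorial_add (n / 2) (n - n / 2)
  rw [Nat.add_sub_cancel' (Nat.div_le_self n 2)] at hdvd
  calc (n / 2)! * (n / 2)! ≤ (n / 2)! * (n - n / 2)! :=
        Nat.mul_le_mul_left _ (factorial_le (by omega))
    _ ≤ n ! := Nat.le_of_dvd (factorial_pos n) hdvd

namespace Real

lemma continuous_inv_Gamma : Continuous fun s : ℝ => (Gamma s)⁻¹ := by
  have h (s : ℝ) : (Gamma s)⁻¹ = ((Complex.Gamma s)⁻¹).re := by
    rw [Complex.Gamma_ofReal, ← Complex.ofReal_inv, Complex.ofReal_re]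
  simp_rw [h]
  exact Complex.continuous_re.comp <|
    Complex.differentiable_one_div_Gamma.continuous.comp Complex.continuous_ofReal

lemma inv_Gamma_one_sub {s : ℝ} (hs : 0 < s) :
    (Gamma (1 - s))⁻¹ = Gamma s * sin (π * s) / π := by
  have hΓ : Gamma s ≠ 0 := (Gamma_pos_of_pos hs).ne'
  have hrefl := Gamma_mul_Gamma_one_sub s
  by_cases hsin : sin (π * s) = 0
  · rw [hsin, div_zero, mul_eq_zero_iff_left hΓ] at hrefl
    simp [hrefl, hsin]
  · rw [eq_div_iff hsin] at hrefl
    have hΓ' : Gamma (1 - s) ≠ 0 := by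
      rintro h
      rw [h, mul_zero, zero_mul] at hrefl
      exact pi_ne_zero hrefl.symm
    rw [inv_eq_iff_eq_inv, inv_div, eq_div_iff (mul_ne_zero hΓ hsin)]
    linear_combination hrefl

lemma abs_inv_Gamma_one_sub_le {s : ℝ} (hs : 0 < s) : |(Gamma (1 - s))⁻¹| ≤ Gamma s / π := by
  rw [inv_Gamma_one_sub hs, abs_div, abs_mul, abs_of_pos (Gamma_pos_of_pos hs), abs_of_pos pi_pos]
  gcongr
  exact mul_le_of_le_one_right (Gamma_pos_of_pos hs).le (abs_sin_le_one _)

lemma Gamma_one_half_sub_nat_mul_factorial_s7 (k : ℕ) :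
    Gamma (1 / 2 - k) * (2 * k)! = (-4) ^ k * k ! * √π := by
  induction k with
  | zero => simpa using Gamma_one_half_eq
  | succ k ih =>
    have hs : (1 / 2 - (k + 1) : ℝ) ≠ 0 := by linarith [k.cast_nonneg (α := ℝ)]
    have hstep : Gamma (1 / 2 - k) = (1 / 2 - (k + 1)) * Gamma (1 / 2 - (k + 1)) := by
      rw [← Gamma_add_one hs]; ring_nf
    rw [Nat.mul_add_one 2 k, factorial_succ, factorial_succ, factorial_succ, ← mul_right_inj' hs]
    push_cast
    linear_combination (-(2 * k + 2) * (2 * k + 1) * (2 * k)! : ℝ) * hstep +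
      (2 * k + 2) * (2 * k + 1) * ih

lemma summable_pow_div_factorial_div_two (r : ℝ) :
    Summable fun n : ℕ => r ^ n / (n / 2)! := by
  have hexp := summable_pow_div_factorial (r ^ 2)
  refine Summable.even_add_odd (hexp.congr fun k => ?_) ((hexp.mul_left r).congr fun k => ?_)
  · rw [Nat.mul_div_cancel_left k two_pos]
    ring
  · rw [show (2 * k + 1) / 2 = k by omega]
    ring

lemma summable_pow_mul_factorial_div_two_div_factorial {r : ℝ} (hr : 0 ≤ r) :
    Summable fun n : ℕ => r ^ n * (n / 2)! / n ! := by
  refine (summable_pow_div_factorial_div_two r).of_nonneg_of_le (fun n => by positivity)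
    fun n => ?_
  rw [div_le_div_iff₀ (by positivity) (by positivity), mul_assoc]
  exact mul_le_mul_of_nonneg_left (by exact_mod_cast n.factorial_div_two_mul_self_le)
    (pow_nonneg hr n)

end Real

lemma abs_inv_Gamma_mainardi_arg_le {a ν : ℝ} (ha : 0 < a) (haν : a ≤ ν) (hν : ν ≤ 1 / 2)
    (n : ℕ) : |(Gamma (-ν * n + 1 - ν))⁻¹| ≤ (Gamma a + (n / 2)!) / π := by
  set t := ν * (n + 1)
  have hn : (n : ℝ) ≤ 2 * (n / 2 : ℕ) + 1 := by exact_mod_cast (by omega : n ≤ 2 * (n / 2) + 1)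
  have hat : a ≤ t := by nlinarith [n.cast_nonneg (α := ℝ)]
  have htn : t ≤ (n / 2 : ℕ) + 1 := by nlinarith [n.cast_nonneg (α := ℝ)]
  have hΓt : Gamma t ≤ Gamma a + (n / 2)! := by
    have := convexOn_Gamma.le_max_of_mem_Icc ha (by positivity : (0 : ℝ) < (n / 2 : ℕ) + 1)
      ⟨hat, htn⟩
    rw [Gamma_nat_eq_factorial] at this
    exact this.trans (max_le_add_of_nonneg (Gamma_pos_of_pos ha).le (by positivity))
  rw [show -ν * n + 1 - ν = 1 - t by ring]
  exact (abs_inv_Gamma_one_sub_le (ha.trans_le hat)).trans (by gcongr)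

lemma continuousOn_mainardi (x : ℝ) {a : ℝ} (ha : 0 < a) :
    ContinuousOn (fun ν => mainardi ν x) (Icc a (1 / 2)) := by
  have hterm (ν : ℝ) (n : ℕ) : (-x) ^ n / (n ! * Gamma (-ν * n + 1 - ν))
      = (-x) ^ n / n ! * (Gamma (-ν * n + 1 - ν))⁻¹ := by ring
  simp_rw [mainardi, hterm]
  refine continuousOn_tsum
    (u := fun n => (|x| ^ n / n ! * Gamma a + |x| ^ n * (n / 2)! / n !) / π)
    (fun n => (continuous_const.mul (continuous_inv_Gamma.comp (by fun_prop))).continuousOn)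
    ((((summable_pow_div_factorial |x|).mul_right _).add
      (summable_pow_mul_factorial_div_two_div_factorial (abs_nonneg x))).div_const π)
    fun n ν ⟨haν, hν⟩ => ?_
  calc ‖(-x) ^ n / n ! * (Gamma (-ν * n + 1 - ν))⁻¹‖
      = |x| ^ n / n ! * |(Gamma (-ν * n + 1 - ν))⁻¹| := by
        rw [norm_mul, norm_div, norm_pow, norm_neg, Real.norm_natCast]; rfl
    _ ≤ |x| ^ n / n ! * ((Gamma a + (n / 2)!) / π) := by
        gcongr; exact abs_inv_Gamma_mainardi_arg_le ha haν hν n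
    _ = (|x| ^ n / n ! * Gamma a + |x| ^ n * (n / 2)! / n !) / π := by ring

lemma mainardi_one_half (x : ℝ) : mainardi (1 / 2) x = 1 / √π * exp (-x ^ 2 / 4) := by
  refine (HasSum.tsum_eq ?_).trans (add_zero _)
  refine HasSum.even_add_odd ?_ (hasSum_zero.congr_fun fun k => ?_)
  · rw [exp_eq_exp_ℝ]
    refine ((NormedSpace.expSeries_div_hasSum_exp (-x ^ 2 / 4)).mul_left (1 / √π)).congr_fun
      fun k => ?_
    rw [show -(1 / 2 : ℝ) * ((2 * k : ℕ) : ℝ) + 1 - 1 / 2 = 1 / 2 - k by push_cast; ring,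
      mul_comm (((2 * k)! : ℕ) : ℝ), Gamma_one_half_sub_nat_mul_factorial_s7, pow_mul, neg_sq,
      show -x ^ 2 / 4 = x ^ 2 / (-4) by ring, div_pow]
    field_simp
  · rw [show -(1 / 2 : ℝ) * ((2 * k + 1 : ℕ) : ℝ) + 1 - 1 / 2 = -k by push_cast; ring,
      Gamma_neg_nat_eq_zero, mul_zero, div_zero]

theorem mainardi_tendsto_gaussian_general (x : ℝ) :
    Filter.Tendsto (fun α : ℝ => mainardi (α / 2) x)
      (nhdsWithin 1 (Set.Iio 1))
      (nhds ((1 / Real.sqrt π) * Real.exp (-x ^ 2 / 4))) := by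
  rw [← mainardi_one_half]
  have hcont := continuousOn_mainardi x (a := 1 / 4) (by norm_num) (1 / 2) ⟨by norm_num, le_rfl⟩
  refine hcont.tendsto.comp (tendsto_nhdsWithin_iff.2 ⟨?_, ?_⟩)
  · exact ((continuous_id.div_const (2 : ℝ)).tendsto' 1 (1 / 2) (by norm_num)).mono_left
      nhdsWithin_le_nhds
  · filter_upwards [Ioo_mem_nhdsLT (show (1 / 2 : ℝ) < 1 by norm_num)] with α ⟨h1, h2⟩
    exact ⟨by linarith, by linarith⟩

/-- For each fixed `x ≥ 0`, `M_{α/2}(x) → (1/√π) e^{-x²/4}` as `α → 1⁻`. -/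
theorem mainardi_tendsto_gaussian (x : ℝ) (hx : 0 ≤ x) :
    Filter.Tendsto (fun α : ℝ => mainardi (α / 2) x)
      (nhdsWithin 1 (Set.Iio 1))
      (nhds ((1 / Real.sqrt π) * Real.exp (-x ^ 2 / 4))) :=
  mainardi_tendsto_gaussian_general x
end

section
/- For x ≥ 0 and 1/2 < α < 1, the even-part series of the Mainardi function is dominated termwise (for k ≥ 3) by x^{2k} k! / (π (2k)!); i.e. for each integer k ≥ 3, |x^{2k} / ((2k)! Γ(1 - α(k + 1/2)))| ≤ x^{2k} k! / (π (2k)!). -/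
open Real

/-- `Γ(y) ≤ k!` for `7/4 ≤ y ≤ k + 1/2`, `3 ≤ k`. -/
lemma Gamma_le_factorial (k : ℕ) (hk : 3 ≤ k) (y : ℝ) (h1 : 7/4 ≤ y)
    (h2 : y ≤ (k : ℝ) + 1/2) : Real.Gamma y ≤ (Nat.factorial k : ℝ) := by
  have hk6 : (6 : ℝ) ≤ (Nat.factorial k : ℝ) := by
    have := Nat.factorial_le hk
    simp [Nat.factorial] at this ⊢
    exact_mod_cast this
  rcases le_or_gt 2 y with hy2 | hy2
  · have hle : y ≤ (k : ℝ) + 1 := by linarith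
    have hmem : ((k : ℝ) + 1) ∈ Set.Ici (2 : ℝ) := by
      simp only [Set.mem_Ici]
      have : (3 : ℝ) ≤ (k : ℝ) := by exact_mod_cast hk
      linarith
    have := (Real.Gamma_strictMonoOn_Ici.monotoneOn) (Set.mem_Ici.mpr hy2) hmem hle
    rwa [Real.Gamma_nat_eq_factorial] at this
  · -- 7/4 ≤ y < 2 : Γ(y) = Γ(y+1)/y ≤ Γ(3)/(7/4) = 8/7 ≤ 6 ≤ k!
    have hy0 : y ≠ 0 := by linarith
    have hrec : Real.Gamma (y + 1) = y * Real.Gamma y := Real.Gamma_add_one hy0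
    have hmono : Real.Gamma (y + 1) ≤ Real.Gamma 3 := by
      have h3 : (3 : ℝ) ∈ Set.Ici (2 : ℝ) := by norm_num
      have hy1 : y + 1 ∈ Set.Ici (2 : ℝ) := by simp only [Set.mem_Ici]; linarith
      exact (Real.Gamma_strictMonoOn_Ici.monotoneOn) hy1 h3 (by linarith)
    have hG3 : Real.Gamma 3 = 2 := by
      rw [show (3:ℝ) = (2:ℕ)+1 by norm_num, Real.Gamma_nat_eq_factorial]
      norm_num [Nat.factorial]
    have hGpos : 0 < Real.Gamma y := Real.Gamma_pos_of_pos (by linarith)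
    have : y * Real.Gamma y ≤ 2 := by rw [← hrec, ← hG3]; exact hmono
    nlinarith

/-- Termwise bound for the even part of the Mainardi series: for `x ≥ 0`,
`1/2 < α < 1` and `k ≥ 3`,
`|x^{2k} / ((2k)! Γ(1 - α(k + 1/2)))| ≤ x^{2k} k! / (π (2k)!)`. -/
theorem mainardi_even_term_bound (x : ℝ) (hx : 0 ≤ x) (α : ℝ)
    (hα1 : 1/2 < α) (hα2 : α < 1) (k : ℕ) (hk : 3 ≤ k) :
    |x ^ (2 * k) / ((Nat.factorial (2 * k) : ℝ) * Real.Gamma (1 - α * (k + 1/2)))| ≤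
      x ^ (2 * k) * (Nat.factorial k : ℝ) / (π * (Nat.factorial (2 * k) : ℝ)) := by
  set y : ℝ := α * (k + 1/2) with hy
  have hk3 : (3 : ℝ) ≤ (k : ℝ) := by exact_mod_cast hk
  have hy1 : 7/4 ≤ y := by nlinarith
  have hy2 : y ≤ (k : ℝ) + 1/2 := by nlinarith
  have hGy : Real.Gamma y ≤ (Nat.factorial k : ℝ) := Gamma_le_factorial k hk y hy1 hy2
  have hGypos : 0 < Real.Gamma y := Real.Gamma_pos_of_pos (by linarith)
  have hxpow : 0 ≤ x ^ (2 * k) := pow_nonneg hx _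
  have hfac : (0 : ℝ) < (Nat.factorial (2 * k) : ℝ) := by positivity
  have hRHS : 0 ≤ x ^ (2 * k) * (Nat.factorial k : ℝ) / (π * (Nat.factorial (2 * k) : ℝ)) := by
    positivity
  rcases eq_or_ne (Real.Gamma (1 - y)) 0 with h0 | h0
  · rw [h0, mul_zero, div_zero, abs_zero]; exact hRHS
  · -- reflection: Γ(y) Γ(1-y) = π / sin(π y)
    have hrefl := Real.Gamma_mul_Gamma_one_sub y
    have hsin : Real.sin (π * y) ≠ 0 := by
      intro hs
      rw [hs, div_zero] at hrefl
      exact h0 (by rcases mul_eq_zero.mp hrefl with h | h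
                   · exact absurd h hGypos.ne'
                   · exact h)
    have hkey : π ≤ (Nat.factorial k : ℝ) * |Real.Gamma (1 - y)| := by
      have habs : |Real.Gamma y| * |Real.Gamma (1 - y)| = π / |Real.sin (π * y)| := by
        rw [← abs_mul, hrefl, abs_div, abs_of_pos Real.pi_pos]
      have hsinle : |Real.sin (π * y)| ≤ 1 := abs_sin_le_one _
      have hsinpos : 0 < |Real.sin (π * y)| := abs_pos.mpr hsin
      have h1 : π ≤ π / |Real.sin (π * y)| :=
        le_div_self Real.pi_pos.le hsinpos hsinle
      calc π ≤ |Real.Gamma y| * |Real.Gamma (1 - y)| := by rw [habs]; exact h1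
        _ ≤ (Nat.factorial k : ℝ) * |Real.Gamma (1 - y)| := by
            apply mul_le_mul_of_nonneg_right _ (abs_nonneg _)
            rw [abs_of_pos hGypos]; exact hGy
    rw [abs_div, abs_of_nonneg hxpow, abs_mul, abs_of_pos hfac]
    rw [div_le_div_iff₀ (by positivity) (by positivity)]
    have : π * (x ^ (2*k)) ≤ x ^ (2*k) * ((Nat.factorial k : ℝ) * |Real.Gamma (1 - y)|) := by
      rcases eq_or_lt_of_le hxpow with hx0 | hx0
      · rw [← hx0]; simp
      · calc π * x ^ (2*k) = x ^ (2*k) * π := by ring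
          _ ≤ _ := by exact mul_le_mul_of_nonneg_left hkey hxpow
      
    nlinarith [abs_nonneg (Real.Gamma (1 - y)), hfac.le, hxpow]
end

section
/- The function ξ ↦ (ξ/2)·erf(ξ/2)·e^{ξ²/4} is a strictly increasing continuous bijection from (0,∞) onto (0,∞); hence for every constant c > 0 the classical Stefan transcendental equation (ξ/2)erf(ξ/2)e^{ξ²/4} = c has a unique positive solution. -/
open Real

lemma cont_exp_neg_sq : Continuous fun t : ℝ => Real.exp (-t ^ 2) := by
  continuity

lemma erf_continuous : Continuous erf := by
  have := intervalIntegral.continuous_primitive (μ := MeasureTheory.volume)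
    (fun a b => (cont_exp_neg_sq).intervalIntegrable a b) 0
  exact continuous_const.mul this

lemma erf_strictMono : StrictMono erf := by
  intro a b hab
  unfold erf
  have hpi : (0:ℝ) < 2 / Real.sqrt π := by positivity
  apply mul_lt_mul_of_pos_left _ hpi
  have hsplit : (∫ t in (0:ℝ)..b, Real.exp (-t ^ 2)) =
      (∫ t in (0:ℝ)..a, Real.exp (-t ^ 2)) + ∫ t in a..b, Real.exp (-t ^ 2) := by
    rw [intervalIntegral.integral_add_adjacent_intervals
      ((cont_exp_neg_sq).intervalIntegrable _ _) ((cont_exp_neg_sq).intervalIntegrable _ _)]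
  rw [hsplit]
  have hpos : 0 < ∫ t in a..b, Real.exp (-t ^ 2) :=
    intervalIntegral.intervalIntegral_pos_of_pos ((cont_exp_neg_sq).intervalIntegrable _ _)
      (fun t => Real.exp_pos _) hab
  linarith

lemma erf_zero : erf 0 = 0 := by simp [erf]

lemma erf_pos {y : ℝ} (hy : 0 < y) : 0 < erf y := by
  have := erf_strictMono hy
  rwa [erf_zero] at this

lemma erf_nonneg {y : ℝ} (hy : 0 ≤ y) : 0 ≤ erf y := by
  rcases hy.eq_or_lt with h | h
  · simp [← h, erf_zero]
  · exact (erf_pos h).le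

noncomputable def stf (ξ : ℝ) : ℝ := (ξ / 2) * erf (ξ / 2) * Real.exp (ξ ^ 2 / 4)

lemma stf_cont : Continuous stf := by
  unfold stf
  exact (((continuous_id.div_const 2).mul (erf_continuous.comp
    (continuous_id.div_const 2))).mul (Real.continuous_exp.comp ((continuous_pow 2).div_const 4)))

lemma stf_mono : StrictMonoOn stf (Set.Ioi 0) := by
  intro a ha b hb hab
  simp only [Set.mem_Ioi] at ha hb
  unfold stf
  have h1 : a / 2 * erf (a / 2) < b / 2 * erf (b / 2) := by
    apply mul_lt_mul (by linarith) (erf_strictMono (by linarith)).le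
      (erf_pos (by linarith)) (by linarith)
  have h2 : Real.exp (a ^ 2 / 4) ≤ Real.exp (b ^ 2 / 4) := by
    apply Real.exp_le_exp.mpr; nlinarith
  have hpos : 0 < a / 2 * erf (a / 2) := mul_pos (by linarith) (erf_pos (by linarith))
  calc a / 2 * erf (a / 2) * Real.exp (a ^ 2 / 4)
      ≤ a / 2 * erf (a / 2) * Real.exp (b ^ 2 / 4) := by
        exact mul_le_mul_of_nonneg_left h2 hpos.le
    _ < b / 2 * erf (b / 2) * Real.exp (b ^ 2 / 4) := by
        exact mul_lt_mul_of_pos_right h1 (Real.exp_pos _)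

lemma stf_zero : stf 0 = 0 := by simp [stf]

lemma stf_pos {ξ : ℝ} (h : 0 < ξ) : 0 < stf ξ :=
  mul_pos (mul_pos (by linarith) (erf_pos (by linarith))) (Real.exp_pos _)

lemma stf_large (c : ℝ) (hc : 0 < c) : ∃ b : ℝ, 0 < b ∧ c < stf b := by
  have he1 : 0 < erf 1 := erf_pos one_pos
  set b := max 2 (2 * (c + 1) / erf 1) with hb
  have hb2 : (2:ℝ) ≤ b := le_max_left _ _
  have hbc : 2 * (c + 1) / erf 1 ≤ b := le_max_right _ _
  refine ⟨b, by linarith, ?_⟩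
  have h1 : erf 1 ≤ erf (b / 2) := by
    rcases eq_or_lt_of_le (show (1:ℝ) ≤ b / 2 by linarith) with h | h
    · rw [h]
    · exact (erf_strictMono h).le
  have h2 : (1:ℝ) ≤ Real.exp (b ^ 2 / 4) := by
    rw [← Real.exp_zero]; apply Real.exp_le_exp.mpr; nlinarith
  have key : c + 1 ≤ b / 2 * erf 1 := by
    rw [div_le_iff₀ he1] at hbc
    linarith
  have : c + 1 ≤ stf b := by
    unfold stf
    calc c + 1 ≤ b / 2 * erf 1 := key
      _ ≤ b / 2 * erf (b / 2) := by
          exact mul_le_mul_of_nonneg_left h1 (by linarith)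
      _ = b / 2 * erf (b / 2) * 1 := (mul_one _).symm
      _ ≤ b / 2 * erf (b / 2) * Real.exp (b ^ 2 / 4) := by
          apply mul_le_mul_of_nonneg_left h2
          exact mul_nonneg (by linarith) (erf_nonneg (by linarith))
  linarith

lemma stf_surj : Set.SurjOn stf (Set.Ioi 0) (Set.Ioi 0) := by
  intro c hc
  simp only [Set.mem_Ioi] at hc
  obtain ⟨b, hb0, hbc⟩ := stf_large c hc
  have := intermediate_value_Ioo (le_of_lt hb0) stf_cont.continuousOn
  have hcmem : c ∈ Set.Ioo (stf 0) (stf b) := by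
    rw [stf_zero]; exact ⟨hc, hbc⟩
  obtain ⟨ξ, hξ, hξc⟩ := this hcmem
  exact ⟨ξ, hξ.1, hξc⟩

/-- The function `ξ ↦ (ξ/2) erf(ξ/2) e^{ξ²/4}` is a strictly increasing continuous
bijection from `(0,∞)` onto `(0,∞)`; hence the classical Stefan transcendental equation
has a unique positive solution for every `c > 0`. -/
theorem classical_stefan_unique_solution :
    StrictMonoOn (fun ξ : ℝ => (ξ / 2) * erf (ξ / 2) * Real.exp (ξ ^ 2 / 4))
      (Set.Ioi 0) ∧
    ContinuousOn (fun ξ : ℝ => (ξ / 2) * erf (ξ / 2) * Real.exp (ξ ^ 2 / 4))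
      (Set.Ioi 0) ∧
    Set.BijOn (fun ξ : ℝ => (ξ / 2) * erf (ξ / 2) * Real.exp (ξ ^ 2 / 4))
      (Set.Ioi 0) (Set.Ioi 0) ∧
    (∀ c : ℝ, 0 < c →
      ∃! ξ : ℝ, 0 < ξ ∧ (ξ / 2) * erf (ξ / 2) * Real.exp (ξ ^ 2 / 4) = c) := by
  have hfeq : (fun ξ : ℝ => (ξ / 2) * erf (ξ / 2) * Real.exp (ξ ^ 2 / 4)) = stf := rfl
  rw [hfeq]
  refine ⟨stf_mono, stf_cont.continuousOn, ⟨fun x hx => stf_pos hx, stf_mono.injOn, stf_surj⟩, ?_⟩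
  intro c hc
  obtain ⟨ξ, hξ, hξc⟩ := stf_surj (Set.mem_Ioi.mpr hc)
  refine ⟨ξ, ⟨hξ, hξc⟩, ?_⟩
  rintro y ⟨hy, hyc⟩
  exact stf_mono.injOn (Set.mem_Ioi.mpr hy) hξ
    (by show stf y = stf ξ; rw [show stf y = _ from rfl] at *; rw [hξc]; exact hyc)
end
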